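/- Let τ ≥ 0, α ∈ (0,1], m > 2, and let u ∈ D(e^{τΛ^{α/2}}Λ^{m/2+2}) on 𝕋² be divergence-free and mean-zero, q ∈ D(e^{τΛ^{α/2}}Λ^{m/2}) mean-zero, and R = ∇Λ^{-1} the periodic Riesz transform. Then |(e^{τΛ^{α/2}}Λ^{m/2+1}(qRq), e^{τΛ^{α/2}}Λ^{m/2+1}u)_{L²}| ≤ C·‖e^{τΛ^{α/2}}Λ^{m/2+2}u‖_{L²}·‖e^{τΛ^{α/2}}Λ^{m/2}q‖²_{L²} with C depending only on m. -/

import Mathlib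

/-- Euclidean norm of a lattice point `k ∈ ℤ²`. -/
noncomputable def znorm (k : ℤ × ℤ) : ℝ :=
  Real.sqrt ((k.1 : ℝ) ^ 2 + (k.2 : ℝ) ^ 2)

/-!
Write `l = -(j + k)`. Since `|u_l · k| ≤ |u_l| |k|`, the factor `|k|⁻¹` is absorbed, and the
Gevrey weight of `l` is split with `|l| ≤ |j| + |k|`: subadditivity of `x ↦ x ^ (α / 2)` gives
`e^{τ|l|^{α/2}} ≤ e^{τ|j|^{α/2}} e^{τ|k|^{α/2}}`, and `|l|^{m/2} ≤ 2^{m/2} (|j|^{m/2} + |k|^{m/2})`.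
Each resulting sum `∑_{j+k+l=0} a_l b_j c_k` is at most `‖a‖₂ ‖b‖₂ ‖c‖₁` (Cauchy–Schwarz in the
inner variable), and the `ℓ¹` norm of `e^{τΛ^{α/2}} q̂` is at most `‖|k|^{-m/2}‖₂` times the
`ℓ²` norm of `e^{τΛ^{α/2}} Λ^{m/2} q̂`, which is finite because `m > 2`.
-/

open Real

lemma znorm_nonneg (k : ℤ × ℤ) : 0 ≤ znorm k := sqrt_nonneg _

lemma znorm_eq_norm (k : ℤ × ℤ) : znorm k = ‖((k.1 : ℝ) : ℂ) + ((k.2 : ℝ) : ℂ) * Complex.I‖ := by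
  rw [Complex.norm_add_mul_I]; rfl

lemma znorm_neg (k : ℤ × ℤ) : znorm (-k) = znorm k := by
  simp [znorm]

lemma znorm_add_le (j k : ℤ × ℤ) : znorm (j + k) ≤ znorm j + znorm k := by
  simp only [znorm_eq_norm]
  refine le_of_eq_of_le ?_ (norm_add_le _ _)
  rw [Prod.fst_add, Prod.snd_add]
  push_cast
  ring_nf

lemma norm_le_znorm (k : ℤ × ℤ) : ‖k‖ ≤ znorm k := by
  rw [Prod.norm_def, Int.norm_eq_abs, Int.norm_eq_abs]
  exact max_le (abs_le_sqrt (le_add_of_nonneg_right (sq_nonneg _)))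
    (abs_le_sqrt (le_add_of_nonneg_left (sq_nonneg _)))

lemma znorm_pos {k : ℤ × ℤ} (hk : k ≠ 0) : 0 < znorm k :=
  (norm_pos_iff.2 hk).trans_le (norm_le_znorm k)

lemma summable_znorm_rpow_neg {m : ℝ} (hm : 2 < m) :
    Summable fun k : ℤ × ℤ => znorm k ^ (-m) := by
  rw [← (finTwoArrowEquiv ℤ).summable_iff]
  refine (EisensteinSeries.summable_one_div_norm_rpow hm).of_nonneg_of_le
    (fun _ => rpow_nonneg (znorm_nonneg _) _) fun x => ?_
  rcases eq_or_ne x 0 with rfl | hx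
  · simp [znorm, zero_rpow (by linarith : -m ≠ 0)]
  · refine rpow_le_rpow_of_nonpos (norm_pos_iff.2 hx) ?_ (by linarith)
    exact ((pi_norm_le_iff_of_nonneg (norm_nonneg _)).2
      (Fin.forall_fin_two.2 ⟨norm_fst_le (x 0, x 1), norm_snd_le (x 0, x 1)⟩)).trans
      (norm_le_znorm _)

lemma norm_mul_add_mul_le (a b : ℂ) (x y : ℝ) :
    ‖a * x + b * y‖ ≤ √(‖a‖ ^ 2 + ‖b‖ ^ 2) * √(x ^ 2 + y ^ 2) := by
  rw [← sqrt_mul (by positivity)]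
  refine (norm_add_le _ _).trans (le_sqrt_of_sq_le ?_)
  simp only [norm_mul, Complex.norm_real, norm_eq_abs]
  nlinarith [sq_nonneg (‖a‖ * |y| - ‖b‖ * |x|), sq_abs x, sq_abs y]

lemma rpow_le_two_rpow_mul_add_rpow {x y z s : ℝ} (hx : 0 ≤ x) (hy : 0 ≤ y) (hz : 0 ≤ z)
    (hs : 0 ≤ s) (hxyz : x ≤ y + z) : x ^ s ≤ 2 ^ s * (y ^ s + z ^ s) := by
  calc x ^ s ≤ (2 * max y z) ^ s :=
        rpow_le_rpow hx (by linarith [le_max_left y z, le_max_right y z]) hs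
    _ = 2 ^ s * max y z ^ s := mul_rpow zero_le_two (hy.trans (le_max_left _ _))
    _ ≤ 2 ^ s * (y ^ s + z ^ s) := by
        gcongr
        rcases max_cases y z with ⟨h, -⟩ | ⟨h, -⟩ <;> rw [h] <;>
          linarith [rpow_nonneg hy s, rpow_nonneg hz s]

lemma exp_mul_rpow_le_mul {x y z τ p : ℝ} (hx : 0 ≤ x) (hy : 0 ≤ y) (hz : 0 ≤ z) (hτ : 0 ≤ τ)
    (hp : 0 ≤ p) (hp1 : p ≤ 1) (hxyz : x ≤ y + z) :
    exp (τ * x ^ p) ≤ exp (τ * y ^ p) * exp (τ * z ^ p) := by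
  rw [← exp_add, exp_le_exp, ← mul_add]
  exact mul_le_mul_of_nonneg_left
    ((rpow_le_rpow hx hxyz hp).trans (rpow_add_le_add_rpow hy hz hp hp1)) hτ

lemma summable_and_tsum_mul_le_sqrt_mul_sqrt {ι : Type*} {f g : ι → ℝ} (hf : ∀ i, 0 ≤ f i)
    (hg : ∀ i, 0 ≤ g i) (hf2 : Summable fun i => f i ^ 2) (hg2 : Summable fun i => g i ^ 2) :
    (Summable fun i => f i * g i) ∧ ∑' i, f i * g i ≤ √(∑' i, f i ^ 2) * √(∑' i, g i ^ 2) := by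
  have h := summable_and_inner_le_Lp_mul_Lq_tsum_of_nonneg Real.HolderConjugate.two_two hf hg
    (by simpa only [rpow_two] using hf2) (by simpa only [rpow_two] using hg2)
  simpa only [rpow_two, sqrt_eq_rpow] using h


theorem summable_and_tsum_trilinear_le {G : Type*} [AddGroup G] {U Q E : G → ℝ}
    (hU : ∀ l, 0 ≤ U l) (hQ : ∀ k, 0 ≤ Q k) (hE : ∀ j, 0 ≤ E j)
    (hU2 : Summable fun l => U l ^ 2) (hQ2 : Summable fun k => Q k ^ 2) (hE1 : Summable E) :
    (Summable fun p : G × G => E p.1 * (U (-(p.1 + p.2)) * Q p.2)) ∧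
      ∑' p : G × G, E p.1 * (U (-(p.1 + p.2)) * Q p.2) ≤
        (∑' j, E j) * (√(∑' l, U l ^ 2) * √(∑' k, Q k ^ 2)) := by
  set C := √(∑' l, U l ^ 2) * √(∑' k, Q k ^ 2)
  have hinner : ∀ j, (Summable fun k => U (-(j + k)) * Q k) ∧ ∑' k, U (-(j + k)) * Q k ≤ C := by
    intro j
    let e : G ≃ G := (Equiv.addLeft j).trans (Equiv.neg G)
    have h := summable_and_tsum_mul_le_sqrt_mul_sqrt (fun k => hU (e k)) hQ
      (e.summable_iff.2 hU2) hQ2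
    rwa [e.tsum_eq fun l => U l ^ 2] at h
  have hrow : ∀ j, ∑' k, E j * (U (-(j + k)) * Q k) ≤ E j * C := fun j => by
    rw [tsum_mul_left]
    exact mul_le_mul_of_nonneg_left (hinner j).2 (hE j)
  have hrows : ∀ j, Summable fun k => E j * (U (-(j + k)) * Q k) :=
    fun j => (hinner j).1.mul_left (E j)
  have hsum : Summable fun p : G × G => E p.1 * (U (-(p.1 + p.2)) * Q p.2) :=
    (summable_prod_of_nonneg fun p => mul_nonneg (hE _) (mul_nonneg (hU _) (hQ _))).2
      ⟨hrows, (hE1.mul_right C).of_nonneg_of_le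
        (fun j => tsum_nonneg fun k => mul_nonneg (hE _) (mul_nonneg (hU _) (hQ _))) hrow⟩
  refine ⟨hsum, ?_⟩
  rw [hsum.tsum_prod' hrows, ← tsum_mul_right]
  exact (hsum.prod).tsum_le_tsum hrow (hE1.mul_right C)

theorem summable_and_tsum_symm_trilinear_le {G : Type*} [AddCommGroup G] {U Q E : G → ℝ}
    (hU : ∀ l, 0 ≤ U l) (hQ : ∀ k, 0 ≤ Q k) (hE : ∀ j, 0 ≤ E j)
    (hU2 : Summable fun l => U l ^ 2) (hQ2 : Summable fun k => Q k ^ 2) (hE1 : Summable E) :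
    (Summable fun p : G × G => U (-(p.1 + p.2)) * (Q p.1 * E p.2 + E p.1 * Q p.2)) ∧
      ∑' p : G × G, U (-(p.1 + p.2)) * (Q p.1 * E p.2 + E p.1 * Q p.2) ≤
        2 * ((∑' j, E j) * (√(∑' l, U l ^ 2) * √(∑' k, Q k ^ 2))) := by
  obtain ⟨hs, hle⟩ := summable_and_tsum_trilinear_le hU hQ hE hU2 hQ2 hE1
  set f : G × G → ℝ := fun p => E p.1 * (U (-(p.1 + p.2)) * Q p.2)
  have hswap : Summable fun p : G × G => f p.swap := hs.prod_symm
  have hsplit : (fun p : G × G => U (-(p.1 + p.2)) * (Q p.1 * E p.2 + E p.1 * Q p.2)) =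
      fun p => f p.swap + f p := by
    ext p
    simp only [f, Prod.fst_swap, Prod.snd_swap, add_comm p.2 p.1]
    ring
  rw [hsplit]
  refine ⟨hswap.add hs, ?_⟩
  have hswap_eq : ∑' p : G × G, f p.swap = ∑' p, f p := (Equiv.prodComm G G).tsum_eq f
  rw [hswap.tsum_add hs, hswap_eq]
  linarith

theorem norm_tsum_tsum_le_tsum {α β E : Type*} [NormedAddCommGroup E] [CompleteSpace E]
    {F : α → β → E} {g : α × β → ℝ} (hg : Summable g) (hFg : ∀ j k, ‖F j k‖ ≤ g (j, k)) :
    ‖∑' j, ∑' k, F j k‖ ≤ ∑' p, g p := by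
  have hF : Summable fun p : α × β => ‖F p.1 p.2‖ :=
    hg.of_nonneg_of_le (fun _ => norm_nonneg _) fun p => hFg p.1 p.2
  rw [← hF.of_norm.tsum_prod' fun j => (hF.prod_factor j).of_norm]
  exact (norm_tsum_le_tsum_norm hF).trans (hF.tsum_le_tsum (fun p => hFg p.1 p.2) hg)

/-- The Fourier multiplier of `e^{τΛ^{α/2}} Λ^s` on `𝕋²`. -/
noncomputable def gevreyWeight (τ α s : ℝ) (k : ℤ × ℤ) : ℝ :=
  exp (τ * znorm k ^ (α / 2)) * znorm k ^ s

section gevreyWeight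

variable {τ α : ℝ}

lemma gevreyWeight_nonneg (s : ℝ) (k : ℤ × ℤ) : 0 ≤ gevreyWeight τ α s k :=
  mul_nonneg (exp_pos _).le (rpow_nonneg (znorm_nonneg k) s)

lemma gevreyWeight_mul_gevreyWeight {s t : ℝ} (hst : s + t ≠ 0) (k : ℤ × ℤ) :
    gevreyWeight τ α s k * gevreyWeight τ α t k =
      exp (2 * τ * znorm k ^ (α / 2)) * znorm k ^ (s + t) := by
  rw [gevreyWeight, gevreyWeight, rpow_add' (znorm_nonneg k) hst, two_mul, add_mul, exp_add]
  ring

lemma gevreyWeight_sq (s : ℝ) (k : ℤ × ℤ) :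
    gevreyWeight τ α s k ^ 2 = exp (2 * τ * znorm k ^ (α / 2)) * znorm k ^ (2 * s) := by
  rw [gevreyWeight, mul_pow, ← exp_nat_mul, ← rpow_mul_natCast (znorm_nonneg k)]
  push_cast
  ring_nf

lemma gevreyWeight_zero_eq_rpow_neg_mul {k : ℤ × ℤ} (hk : k ≠ 0) (s : ℝ) :
    gevreyWeight τ α 0 k = znorm k ^ (-s) * gevreyWeight τ α s k := by
  rw [gevreyWeight, gevreyWeight, mul_left_comm, ← rpow_add (znorm_pos hk), neg_add_cancel]

lemma gevreyWeight_le_of_znorm_le_add (hτ : 0 ≤ τ) (hα : 0 ≤ α) (hα2 : α ≤ 2) {s : ℝ}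
    (hs : 0 ≤ s) {j k l : ℤ × ℤ} (hl : znorm l ≤ znorm j + znorm k) :
    gevreyWeight τ α s l ≤ 2 ^ s * (gevreyWeight τ α s j * gevreyWeight τ α 0 k +
      gevreyWeight τ α 0 j * gevreyWeight τ α s k) := by
  have hexp := exp_mul_rpow_le_mul (znorm_nonneg l) (znorm_nonneg j) (znorm_nonneg k) hτ
    (by linarith : 0 ≤ α / 2) (by linarith) hl
  have hpow := rpow_le_two_rpow_mul_add_rpow (znorm_nonneg l) (znorm_nonneg j) (znorm_nonneg k)
    hs hl
  simp only [gevreyWeight, rpow_zero, mul_one]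
  calc exp (τ * znorm l ^ (α / 2)) * znorm l ^ s
      ≤ (exp (τ * znorm j ^ (α / 2)) * exp (τ * znorm k ^ (α / 2))) *
          (2 ^ s * (znorm j ^ s + znorm k ^ s)) :=
        mul_le_mul hexp hpow (rpow_nonneg (znorm_nonneg l) s) (by positivity)
    _ = _ := by ring

lemma summable_and_tsum_gevreyWeight_zero_mul_le {m : ℝ} (hm : 2 < m) {a : ℤ × ℤ → ℝ}
    (ha : ∀ k, 0 ≤ a k) (ha0 : a 0 = 0)
    (ha2 : Summable fun k => (gevreyWeight τ α (m / 2) k * a k) ^ 2) :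
    (Summable fun k => gevreyWeight τ α 0 k * a k) ∧
      ∑' k, gevreyWeight τ α 0 k * a k ≤
        √(∑' k : ℤ × ℤ, znorm k ^ (-m)) * √(∑' k, (gevreyWeight τ α (m / 2) k * a k) ^ 2) := by
  have heq : ∀ k, gevreyWeight τ α 0 k * a k =
      znorm k ^ (-(m / 2)) * (gevreyWeight τ α (m / 2) k * a k) := fun k => by
    rcases eq_or_ne k 0 with rfl | hk
    · simp [ha0]
    · rw [gevreyWeight_zero_eq_rpow_neg_mul hk (m / 2), mul_assoc]
  have hsq : ∀ k : ℤ × ℤ, (znorm k ^ (-(m / 2))) ^ 2 = znorm k ^ (-m) := fun k => by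
    rw [← rpow_mul_natCast (znorm_nonneg k)]
    ring_nf
  obtain ⟨hsum, hle⟩ := summable_and_tsum_mul_le_sqrt_mul_sqrt
    (fun k => rpow_nonneg (znorm_nonneg k) (-(m / 2)))
    (fun k => mul_nonneg (gevreyWeight_nonneg (τ := τ) (α := α) (m / 2) k) (ha k))
    ((summable_znorm_rpow_neg hm).congr fun k => (hsq k).symm) ha2
  rw [tsum_congr hsq] at hle
  exact ⟨hsum.congr fun k => (heq k).symm, (tsum_congr heq).trans_le hle⟩

lemma norm_forcing_term_le {m : ℝ} (hτ : 0 ≤ τ) (hα : 0 ≤ α) (hα2 : α ≤ 2) (hm : 0 ≤ m)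
    {j k l : ℤ × ℤ} (hl : znorm l ≤ znorm j + znorm k) (v : ℂ × ℂ) (a b : ℂ) :
    ‖((znorm l ^ (m + 2) * exp (2 * τ * znorm l ^ (α / 2)) * (znorm k)⁻¹ : ℝ) : ℂ) *
        (a * (v.1 * (k.1 : ℂ) + v.2 * (k.2 : ℂ)) * b)‖ ≤
      2 ^ (m / 2) * (gevreyWeight τ α (m / 2 + 2) l * √(‖v.1‖ ^ 2 + ‖v.2‖ ^ 2) *
        (gevreyWeight τ α (m / 2) j * ‖a‖ * (gevreyWeight τ α 0 k * ‖b‖) +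
          gevreyWeight τ α 0 j * ‖a‖ * (gevreyWeight τ α (m / 2) k * ‖b‖))) := by
  set S := √(‖v.1‖ ^ 2 + ‖v.2‖ ^ 2)
  have hdot : ‖v.1 * (k.1 : ℂ) + v.2 * (k.2 : ℂ)‖ ≤ S * znorm k := by
    have h := norm_mul_add_mul_le v.1 v.2 k.1 k.2
    rw [Complex.ofReal_intCast, Complex.ofReal_intCast] at h
    exact h
  have hweight : znorm l ^ (m + 2) * exp (2 * τ * znorm l ^ (α / 2)) =
      gevreyWeight τ α (m / 2) l * gevreyWeight τ α (m / 2 + 2) l := by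
    rw [gevreyWeight_mul_gevreyWeight (by linarith)]
    ring_nf
  have hsplit := gevreyWeight_le_of_znorm_le_add hτ hα hα2 (by positivity : 0 ≤ m / 2) hl
  have hWl := gevreyWeight_nonneg (τ := τ) (α := α) (m / 2) l
  have hUl := gevreyWeight_nonneg (τ := τ) (α := α) (m / 2 + 2) l
  have hk := inv_nonneg.2 (znorm_nonneg k)
  rw [norm_mul, Complex.norm_real, norm_of_nonneg (by rw [hweight]; positivity), hweight,
    norm_mul, norm_mul]
  calc gevreyWeight τ α (m / 2) l * gevreyWeight τ α (m / 2 + 2) l * (znorm k)⁻¹ *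
        (‖a‖ * ‖v.1 * (k.1 : ℂ) + v.2 * (k.2 : ℂ)‖ * ‖b‖)
      ≤ gevreyWeight τ α (m / 2) l * gevreyWeight τ α (m / 2 + 2) l * (znorm k)⁻¹ *
        (‖a‖ * (S * znorm k) * ‖b‖) := by gcongr
    _ = gevreyWeight τ α (m / 2) l * (gevreyWeight τ α (m / 2 + 2) l * S * ‖a‖ * ‖b‖) *
        ((znorm k)⁻¹ * znorm k) := by ring
    _ ≤ gevreyWeight τ α (m / 2) l * (gevreyWeight τ α (m / 2 + 2) l * S * ‖a‖ * ‖b‖) :=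
        mul_le_of_le_one_right (by positivity) inv_mul_le_one
    _ ≤ 2 ^ (m / 2) * (gevreyWeight τ α (m / 2) j * gevreyWeight τ α 0 k +
          gevreyWeight τ α 0 j * gevreyWeight τ α (m / 2) k) *
        (gevreyWeight τ α (m / 2 + 2) l * S * ‖a‖ * ‖b‖) := by gcongr
    _ = _ := by ring

lemma norm_tsum_forcing_le {m : ℝ} (hτ : 0 ≤ τ) (hα : 0 ≤ α) (hα2 : α ≤ 2) (hm : 2 < m)
    (u : ℤ × ℤ → ℂ × ℂ) (q : ℤ × ℤ → ℂ) (hq0 : q 0 = 0)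
    (hu : Summable fun l => (gevreyWeight τ α (m / 2 + 2) l * √(‖(u l).1‖ ^ 2 + ‖(u l).2‖ ^ 2)) ^ 2)
    (hq : Summable fun k => (gevreyWeight τ α (m / 2) k * ‖q k‖) ^ 2) :
    ‖∑' (j : ℤ × ℤ) (k : ℤ × ℤ),
        ((znorm (-(j + k)) ^ (m + 2) * exp (2 * τ * znorm (-(j + k)) ^ (α / 2)) * (znorm k)⁻¹ :
          ℝ) : ℂ) * (q j * ((u (-(j + k))).1 * (k.1 : ℂ) + (u (-(j + k))).2 * (k.2 : ℂ)) * q k)‖ ≤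
      2 * 2 ^ (m / 2) * √(∑' k : ℤ × ℤ, znorm k ^ (-m)) *
        √(∑' l, (gevreyWeight τ α (m / 2 + 2) l * √(‖(u l).1‖ ^ 2 + ‖(u l).2‖ ^ 2)) ^ 2) *
        ∑' k, (gevreyWeight τ α (m / 2) k * ‖q k‖) ^ 2 := by
  obtain ⟨hE, hEle⟩ := summable_and_tsum_gevreyWeight_zero_mul_le hm (fun k => norm_nonneg (q k))
    (by simp [hq0]) hq
  obtain ⟨hG, hGle⟩ := summable_and_tsum_symm_trilinear_le
    (fun l => mul_nonneg (gevreyWeight_nonneg _ l) (sqrt_nonneg _))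
    (fun k => mul_nonneg (gevreyWeight_nonneg _ k) (norm_nonneg (q k)))
    (fun k => mul_nonneg (gevreyWeight_nonneg _ k) (norm_nonneg (q k))) hu hq hE
  rw [← mul_self_sqrt (tsum_nonneg fun k => sq_nonneg (gevreyWeight τ α (m / 2) k * ‖q k‖))]
  calc _ ≤ ∑' p : (ℤ × ℤ) × (ℤ × ℤ), 2 ^ (m / 2) *
        (gevreyWeight τ α (m / 2 + 2) (-(p.1 + p.2)) *
            √(‖(u (-(p.1 + p.2))).1‖ ^ 2 + ‖(u (-(p.1 + p.2))).2‖ ^ 2) *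
          (gevreyWeight τ α (m / 2) p.1 * ‖q p.1‖ * (gevreyWeight τ α 0 p.2 * ‖q p.2‖) +
            gevreyWeight τ α 0 p.1 * ‖q p.1‖ * (gevreyWeight τ α (m / 2) p.2 * ‖q p.2‖))) :=
        norm_tsum_tsum_le_tsum (hG.mul_left _) fun j k =>
          norm_forcing_term_le hτ hα hα2 (by linarith)
            ((znorm_neg (j + k)).trans_le (znorm_add_le j k)) _ _ _
    _ ≤ 2 ^ (m / 2) * (2 * (_ * _ * (_ * _))) := by
        rw [tsum_mul_left]
        gcongr
        exact hGle.trans (by gcongr)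
    _ = _ := by ring

end gevreyWeight

/-- Gevrey product estimate for the electric forcing term (Fourier-side
formulation of Proposition 8.2): for `m > 2` there is `C = C(m) > 0` such that
for all `τ ≥ 0`, `α ∈ (0,1]`, and Fourier coefficients `u`, `q` of a mean-zero
divergence-free real vector field `u ∈ D(e^{τΛ^{α/2}}Λ^{m/2+2})` and a mean-zero
real scalar `q ∈ D(e^{τΛ^{α/2}}Λ^{m/2})`, the trilinear sum representing
`(e^{τΛ^{α/2}}Λ^{m/2+1}(qRq), e^{τΛ^{α/2}}Λ^{m/2+1}u)_{L²}` is bounded by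
`C·‖e^{τΛ^{α/2}}Λ^{m/2+2}u‖·‖e^{τΛ^{α/2}}Λ^{m/2}q‖²`. -/
theorem gevrey_electric_forcing_estimate (m : ℝ) (hm : 2 < m) :
    ∃ C > 0, ∀ (α τ : ℝ), 0 < α → α ≤ 1 → 0 ≤ τ →
      ∀ (u : ℤ × ℤ → ℂ × ℂ) (q : ℤ × ℤ → ℂ),
      u 0 = 0 → q 0 = 0 →
      (∀ k : ℤ × ℤ, (k.1 : ℂ) * (u k).1 + (k.2 : ℂ) * (u k).2 = 0) →
      (∀ k : ℤ × ℤ, u (-k) = (starRingEnd ℂ (u k).1, starRingEnd ℂ (u k).2)) →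
      (∀ k : ℤ × ℤ, q (-k) = starRingEnd ℂ (q k)) →
      Summable (fun k : ℤ × ℤ =>
        Real.exp (2 * τ * znorm k ^ (α / 2)) * znorm k ^ (m + 4) *
          (‖(u k).1‖ ^ 2 + ‖(u k).2‖ ^ 2)) →
      Summable (fun k : ℤ × ℤ =>
        Real.exp (2 * τ * znorm k ^ (α / 2)) * znorm k ^ m * ‖q k‖ ^ 2) →
      ‖∑' (j : ℤ × ℤ) (k : ℤ × ℤ),
          ((znorm (-(j + k)) ^ (m + 2) *
              Real.exp (2 * τ * znorm (-(j + k)) ^ (α / 2)) * (znorm k)⁻¹ : ℝ) : ℂ) *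
            (q j * ((u (-(j + k))).1 * (k.1 : ℂ) + (u (-(j + k))).2 * (k.2 : ℂ)) * q k)‖
        ≤ C *
          Real.sqrt (∑' k : ℤ × ℤ,
            Real.exp (2 * τ * znorm k ^ (α / 2)) * znorm k ^ (m + 4) *
              (‖(u k).1‖ ^ 2 + ‖(u k).2‖ ^ 2)) *
          (∑' k : ℤ × ℤ,
            Real.exp (2 * τ * znorm k ^ (α / 2)) * znorm k ^ m * ‖q k‖ ^ 2) := by
  refine ⟨2 * 2 ^ (m / 2) * √(∑' k : ℤ × ℤ, znorm k ^ (-m)) + 1, by positivity, ?_⟩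
  intro α τ hα hα1 hτ u q _ hq0 _ _ _ hu hq
  have hu_sq : ∀ l, (gevreyWeight τ α (m / 2 + 2) l * √(‖(u l).1‖ ^ 2 + ‖(u l).2‖ ^ 2)) ^ 2 =
      exp (2 * τ * znorm l ^ (α / 2)) * znorm l ^ (m + 4) * (‖(u l).1‖ ^ 2 + ‖(u l).2‖ ^ 2) :=
    fun l => by rw [mul_pow, gevreyWeight_sq, sq_sqrt (by positivity)]; ring_nf
  have hq_sq : ∀ k, (gevreyWeight τ α (m / 2) k * ‖q k‖) ^ 2 =
      exp (2 * τ * znorm k ^ (α / 2)) * znorm k ^ m * ‖q k‖ ^ 2 :=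
    fun k => by rw [mul_pow, gevreyWeight_sq]; ring_nf
  rw [← tsum_congr hu_sq, ← tsum_congr hq_sq]
  refine (norm_tsum_forcing_le hτ hα.le (by linarith) hm u q hq0
    (hu.congr fun l => (hu_sq l).symm) (hq.congr fun k => (hq_sq k).symm)).trans ?_
  gcongr
  linarith
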